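/- arXiv:2411.10933 — 6 statements merged into one kernel-verified Lean document; each statement's English description precedes it below -/
import Mathlib

section
/- Let u = a_1 a_2 ⋯ a_s and v = b_1 b_2 ⋯ b_t be two sequences of positive integers with s ≤ t, and suppose every element of {b_{s+1}, ..., b_t} is strictly greater than every element of {a_1, ..., a_s} and of {b_1, ..., b_s}. Let u' = b_1 ⋯ b_s and v' = a_1 ⋯ a_s b_{s+1} ⋯ b_t. Then inv(u) + inv(v) = inv(u') + inv(v'), where inv(w) counts pairs r < s' with w_r > w_{s'}. -/
def invList (w : List ℕ) : ℕ :=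
  (Finset.univ.filter fun p : Fin w.length × Fin w.length =>
    p.1 < p.2 ∧ w.get p.2 < w.get p.1).card

lemma invList_append (w₁ w₂ : List ℕ)
    (h : ∀ x ∈ w₂, ∀ y ∈ w₁, y < x) :
    invList (w₁ ++ w₂) = invList w₁ + invList w₂ := by
  classical
  unfold invList
  rw [← Finset.card_disjSum]
  refine (Finset.card_bij (fun x _ => Sum.elim
      (fun p : Fin w₁.length × Fin w₁.length =>
        ((⟨p.1, by simp; omega⟩ : Fin (w₁ ++ w₂).length),
         (⟨p.2, by simp; omega⟩ : Fin (w₁ ++ w₂).length)))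
      (fun p : Fin w₂.length × Fin w₂.length =>
        ((⟨w₁.length + p.1, by simp⟩ : Fin (w₁ ++ w₂).length),
         (⟨w₁.length + p.2, by simp⟩ : Fin (w₁ ++ w₂).length))) x)
    ?_ ?_ ?_).symm
  · rintro (⟨i, j⟩ | ⟨i, j⟩) hx
    · rw [Finset.inl_mem_disjSum, Finset.mem_filter] at hx
      obtain ⟨-, hij, hgt⟩ := hx
      simp only [Sum.elim_inl, Finset.mem_filter, Finset.mem_univ, true_and]
      constructor
      · exact hij
      · simp only [List.get_eq_getElem] at hgt ⊢
        rwa [List.getElem_append_left i.isLt, List.getElem_append_left j.isLt]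
    · rw [Finset.inr_mem_disjSum, Finset.mem_filter] at hx
      obtain ⟨-, hij, hgt⟩ := hx
      simp only [Sum.elim_inr, Finset.mem_filter, Finset.mem_univ, true_and]
      constructor
      · simpa using hij
      · simp only [List.get_eq_getElem] at hgt ⊢
        rw [List.getElem_append_right (by omega), List.getElem_append_right (by omega)]
        simpa using hgt
  · rintro (⟨i, j⟩ | ⟨i, j⟩) hx (⟨i', j'⟩ | ⟨i', j'⟩) hx' heq <;>
      simp only [Sum.elim_inl, Sum.elim_inr, Prod.mk.injEq, Fin.mk.injEq, Sum.inl.injEq,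
        Sum.inr.injEq] at heq ⊢
    · exact ⟨Fin.ext heq.1, Fin.ext heq.2⟩
    · exfalso; omega
    · exfalso; omega
    · exact ⟨Fin.ext (by omega), Fin.ext (by omega)⟩
  · rintro ⟨p, q⟩ hpq
    simp only [Finset.mem_filter, Finset.mem_univ, true_and, List.get_eq_getElem] at hpq
    obtain ⟨hlt, hgt⟩ := hpq
    by_cases hq : (q : ℕ) < w₁.length
    · have hp : (p : ℕ) < w₁.length := lt_trans hlt hq
      refine ⟨Sum.inl (⟨p, hp⟩, ⟨q, hq⟩), ?_, ?_⟩
      · rw [Finset.inl_mem_disjSum, Finset.mem_filter]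
        refine ⟨Finset.mem_univ _, hlt, ?_⟩
        simp only [List.get_eq_getElem]
        rwa [List.getElem_append_left hp, List.getElem_append_left hq] at hgt
      · simp
    · push_neg at hq
      have hp : w₁.length ≤ (p : ℕ) := by
        by_contra hc
        push_neg at hc
        rw [List.getElem_append_left hc, List.getElem_append_right hq] at hgt
        exact absurd hgt (not_lt.2 (h _ (List.getElem_mem _) _ (List.getElem_mem _)).le)
      have hq2 : (q : ℕ) - w₁.length < w₂.length := by
        have := q.isLt; simp at this; omega
      have hp2 : (p : ℕ) - w₁.length < w₂.length := by
        have := p.isLt; simp at this; omega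
      refine ⟨Sum.inr (⟨(p : ℕ) - w₁.length, hp2⟩, ⟨(q : ℕ) - w₁.length, hq2⟩), ?_, ?_⟩
      · rw [Finset.inr_mem_disjSum, Finset.mem_filter]
        refine ⟨Finset.mem_univ _, by simp; omega, ?_⟩
        simp only [List.get_eq_getElem]
        rwa [List.getElem_append_right hp, List.getElem_append_right hq] at hgt
      · simp only [Sum.elim_inr, Prod.mk.injEq]
        constructor <;> · apply Fin.ext; simp; omega

/-- Let `u = a_1 ⋯ a_s` and `v = b_1 ⋯ b_t` with `s ≤ t`, such that every element of
`{b_{s+1},…,b_t}` is strictly greater than every element of `{a_1,…,a_s}` and of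
`{b_1,…,b_s}`. With `u' = b_1 ⋯ b_s` and `v' = a_1 ⋯ a_s b_{s+1} ⋯ b_t`, we have
`inv u + inv v = inv u' + inv v'`. -/
theorem inv_sum_invariant_of_swap (u v : List ℕ) (hle : u.length ≤ v.length)
    (hbig : ∀ x ∈ v.drop u.length, (∀ y ∈ u, y < x) ∧ ∀ y ∈ v.take u.length, y < x) :
    invList u + invList v = invList (v.take u.length) + invList (u ++ v.drop u.length) := by
  have h1 : invList v = invList (v.take u.length) + invList (v.drop u.length) := by
    conv_lhs => rw [← List.take_append_drop u.length v]
    exact invList_append _ _ fun x hx y hy => (hbig x hx).2 y hy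
  have h2 : invList (u ++ v.drop u.length) = invList u + invList (v.drop u.length) :=
    invList_append _ _ fun x hx y hy => (hbig x hx).1 y hy
  omega
end

section
/- Let D be a normalized multiplicity-free diagram in [n]×[n], and consider two columns D_j, D_{j'} with j < j' in the same region whose first crossings lie in row i₁, with the second crossing of column j in row i₂ and the second crossing of column j' in row i₃ > i₂ (so D_{j'} has strictly larger signature than D_j). Then D_j contains no box below row i₂; i.e., D_j is a Type I column. -/
/-- Whether the box/crossing status of position `(i, j)` of the diagram `D` matches a
pattern cell: `none` (`*`) imposes no restriction, `some true` (`□`) requires a box,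
`some false` (`×`) requires a crossing (absence of a box). -/
def cellOK (D : ℕ → Finset ℕ) (j i : ℕ) : Option Bool → Prop
  | none => True
  | some b => (i ∈ D j ↔ b = true)

/-- Multiplicitous configuration (A): rows (top to bottom) `(×,×), (□,×), (*,□), (*,*)`. -/
def patA : Fin 4 → Option Bool × Option Bool :=
  ![(some false, some false), (some true, some false), (none, some true), (none, none)]

/-- Multiplicitous configuration (B): rows `(×,□), (×,×), (□,□), (□,*)`. -/
def patB : Fin 4 → Option Bool × Option Bool :=
  ![(some false, some true), (some false, some false), (some true, some true),
    (some true, none)]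

/-- Multiplicitous configuration (C): rows `(×,×), (×,×), (□,□), (□,*)`. -/
def patC : Fin 4 → Option Bool × Option Bool :=
  ![(some false, some false), (some false, some false), (some true, some true),
    (some true, none)]

/-- Multiplicitous configuration (D): rows `(×,□), (□,×), (□,□), (*,*)`. -/
def patD : Fin 4 → Option Bool × Option Bool :=
  ![(some false, some true), (some true, some false), (some true, some true), (none, none)]

/-- Multiplicitous configuration (E): rows `(×,□), (□,×), (□,×), (×,□)`. -/
def patE : Fin 4 → Option Bool × Option Bool :=
  ![(some false, some true), (some true, some false), (some true, some false),
    (some false, some true)]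

/-- Multiplicitous configuration (F): rows `(□,×), (×,□), (□,×), (×,□)`. -/
def patF : Fin 4 → Option Bool × Option Bool :=
  ![(some true, some false), (some false, some true), (some true, some false),
    (some false, some true)]

/-- A diagram (with columns indexed by `[n]`, rows embedded in an arbitrarily large grid)
is multiplicitous if some choice of rows `i₁ < i₂ < i₃ < i₄` and distinct columns
`j₁ ≠ j₂` of `[n]` realizes one of the six configurations (A)–(F) (allowing `j₁ > j₂`
accounts for the column swaps). -/
def Multiplicitous (n : ℕ) (D : ℕ → Finset ℕ) : Prop :=
  ∃ p ∈ [patA, patB, patC, patD, patE, patF], ∃ i : Fin 4 → ℕ, ∃ j₁ j₂ : ℕ,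
    (∀ r, 1 ≤ i r) ∧ StrictMono i ∧
    j₁ ∈ Finset.Icc 1 n ∧ j₂ ∈ Finset.Icc 1 n ∧ j₁ ≠ j₂ ∧
    ∀ r, cellOK D j₁ (i r) (p r).1 ∧ cellOK D j₂ (i r) (p r).2

/-- A diagram is multiplicity-free if it is not multiplicitous. -/
def MultFree (n : ℕ) (D : ℕ → Finset ℕ) : Prop := ¬ Multiplicitous n D

/-- The increasing list of crossings of column `j` within `[n]`, padded with the
sentinel `n + 1` playing the role of `∞`. -/
def colList (n : ℕ) (D : ℕ → Finset ℕ) (j : ℕ) : List ℕ :=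
  ((Finset.Icc 1 n \ D j).sort (· ≤ ·)) ++ [n + 1]

/-- A diagram is normalized if its columns are arranged weakly increasingly, from left to
right, in the lexicographic order of their padded crossing lists. -/
def Normalized (n : ℕ) (D : ℕ → Finset ℕ) : Prop :=
  ∀ j₁ j₂ : ℕ, 1 ≤ j₁ → j₁ ≤ j₂ → j₂ ≤ n →
    colList n D j₁ = colList n D j₂ ∨ List.Lex (· < ·) (colList n D j₁) (colList n D j₂)

/-- `i` is the row of the first (topmost) crossing of column `j`. -/
def FirstCross (D : ℕ → Finset ℕ) (j i : ℕ) : Prop :=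
  1 ≤ i ∧ i ∉ D j ∧ ∀ i', 1 ≤ i' → i' < i → i' ∈ D j

/-- `i₂` is the row of the second crossing of column `j`, given that `i₁` is the row of
the first crossing. -/
def SecondCross (D : ℕ → Finset ℕ) (j i₁ i₂ : ℕ) : Prop :=
  i₁ < i₂ ∧ i₂ ∉ D j ∧ ∀ i', i₁ < i' → i' < i₂ → i' ∈ D j

/-- In a normalized multiplicity-free diagram, if columns `j < j'` lie in the same region
(first crossings both in row `i₁`), with second crossings in rows `i₂` and `i₃`
respectively and `i₂ < i₃` (so column `j'` has strictly larger signature), then column `j`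
has no box below row `i₂`, i.e. it is of Type I. -/
theorem smaller_signature_typeI (n : ℕ) (D : ℕ → Finset ℕ)
    (hsub : ∀ j, D j ⊆ Finset.Icc 1 n)
    (hMF : MultFree n D) (hN : Normalized n D)
    (j j' i₁ i₂ i₃ : ℕ) (hj : 1 ≤ j) (hjj : j < j') (hj' : j' ≤ n)
    (hf : FirstCross D j i₁) (hf' : FirstCross D j' i₁)
    (hs : SecondCross D j i₁ i₂) (hs' : SecondCross D j' i₁ i₃)
    (h23 : i₂ < i₃) :
    ∀ i, i₂ < i → i ∉ D j := by
  intro i hi hiD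
  apply hMF
  have h01 : 1 ≤ i₁ := hf.1
  have h12 : i₁ < i₂ := hs.1
  refine ⟨patA, by simp, ![i₁, i₂, i, i + 1], j', j, ?_, ?_, ?_, ?_, ?_, ?_⟩
  · intro r
    fin_cases r <;> simp <;> omega
  · intro a b hab
    have h1 : i₁ < i₂ := hs.1
    fin_cases a <;> fin_cases b <;> simp_all <;> omega
  · simp only [Finset.mem_Icc]; omega
  · simp only [Finset.mem_Icc]; omega
  · omega
  · have hb : i₂ ∈ D j' := hs'.2.2 i₂ hs.1 h23
    intro r
    fin_cases r <;>
      simp [patA, cellOK, hf.2.1, hf'.2.1, hs.2.1, hb, hiD]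
end

section
/- Let D be a normalized multiplicity-free diagram, and let D_{j₁}, D_{j₂} (j₁ < j₂) be two columns in the same region, both having exactly one box below their second crossing (Type II), with first crossings in row i₁ and second crossings in row i₂ (same rows by equal signature). Then the unique box of D_{j₁} below row i₂ lies in the same row as the unique box of D_{j₂} below row i₂; consequently D_{j₁} = D_{j₂} as subsets of [n]. -/
/-- Realizing configuration (A) at rows `a < b < c < c+1`. -/
lemma mkPatA (n : ℕ) (D : ℕ → Finset ℕ) (a b c jA jB : ℕ)
    (ha : 1 ≤ a) (hab : a < b) (hbc : b < c)
    (hjA : jA ∈ Finset.Icc 1 n) (hjB : jB ∈ Finset.Icc 1 n) (hne : jA ≠ jB)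
    (h1 : a ∉ D jA) (h2 : a ∉ D jB) (h3 : b ∈ D jA) (h4 : b ∉ D jB) (h5 : c ∈ D jB) :
    Multiplicitous n D := by
  refine ⟨patA, by simp, ![a, b, c, c + 1], jA, jB, ?_, ?_, hjA, hjB, hne, ?_⟩
  · intro r; fin_cases r <;> simp <;> omega
  · intro x y hxy
    fin_cases x <;> fin_cases y <;>
      simp_all [Fin.lt_def, Matrix.cons_val_zero, Matrix.cons_val_one] <;> omega
  · intro r; fin_cases r <;> simp [patA, cellOK, h1, h2, h3, h4, h5]

/-- In a normalized multiplicity-free diagram, two Type II columns `j₁ < j₂` of the same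
region (first crossings in row `i₁`, second crossings in row `i₂`, and exactly one box
below row `i₂` in each) have their unique boxes below row `i₂` in the same row;
consequently `D_{j₁} = D_{j₂}`. -/
theorem typeII_columns_equal (n : ℕ) (D : ℕ → Finset ℕ)
    (hsub : ∀ j, D j ⊆ Finset.Icc 1 n)
    (hMF : MultFree n D) (hN : Normalized n D)
    (j₁ j₂ i₁ i₂ : ℕ) (hj₁ : 1 ≤ j₁) (hjj : j₁ < j₂) (hj₂ : j₂ ≤ n)
    (hf₁ : FirstCross D j₁ i₁) (hf₂ : FirstCross D j₂ i₁)
    (hs₁ : SecondCross D j₁ i₁ i₂) (hs₂ : SecondCross D j₂ i₁ i₂)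
    (hII₁ : ((D j₁).filter fun i => i₂ < i).card = 1)
    (hII₂ : ((D j₂).filter fun i => i₂ < i).card = 1) :
    (∀ b₁ ∈ D j₁, ∀ b₂ ∈ D j₂, i₂ < b₁ → i₂ < b₂ → b₁ = b₂) ∧ D j₁ = D j₂ := by
  obtain ⟨b₁, hb₁⟩ := Finset.card_eq_one.mp hII₁
  obtain ⟨b₂, hb₂⟩ := Finset.card_eq_one.mp hII₂
  have hm₁ : b₁ ∈ D j₁ ∧ i₂ < b₁ := by
    have : b₁ ∈ (D j₁).filter fun i => i₂ < i := by rw [hb₁]; simp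
    simpa using this
  have hm₂ : b₂ ∈ D j₂ ∧ i₂ < b₂ := by
    have : b₂ ∈ (D j₂).filter fun i => i₂ < i := by rw [hb₂]; simp
    simpa using this
  have hu₁ : ∀ x ∈ D j₁, i₂ < x → x = b₁ := by
    intro x hx hxi
    have : x ∈ (D j₁).filter fun i => i₂ < i := Finset.mem_filter.mpr ⟨hx, hxi⟩
    rw [hb₁] at this; simpa using this
  have hu₂ : ∀ x ∈ D j₂, i₂ < x → x = b₂ := by
    intro x hx hxi
    have : x ∈ (D j₂).filter fun i => i₂ < i := Finset.mem_filter.mpr ⟨hx, hxi⟩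
    rw [hb₂] at this; simpa using this
  have hi₂ : 1 ≤ i₂ := le_trans hf₁.1 hs₁.1.le
  have hj₁n : j₁ ∈ Finset.Icc 1 n := Finset.mem_Icc.mpr ⟨hj₁, le_trans hjj.le hj₂⟩
  have hj₂n : j₂ ∈ Finset.Icc 1 n := Finset.mem_Icc.mpr ⟨le_trans hj₁ hjj.le, hj₂⟩
  have hbb : b₁ = b₂ := by
    rcases lt_trichotomy b₁ b₂ with h | h | h
    · exfalso
      exact hMF (mkPatA n D i₂ b₁ b₂ j₁ j₂ hi₂ hm₁.2 h hj₁n hj₂n hjj.ne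
        hs₁.2.1 hs₂.2.1 hm₁.1
        (fun hb => (h.ne (hu₂ b₁ hb hm₁.2)).elim) hm₂.1)
    · exact h
    · exfalso
      exact hMF (mkPatA n D i₂ b₂ b₁ j₂ j₁ hi₂ hm₂.2 h hj₂n hj₁n hjj.ne.symm
        hs₂.2.1 hs₁.2.1 hm₂.1
        (fun hb => (h.ne (hu₁ b₂ hb hm₂.2)).elim) hm₁.1)
  constructor
  · intro x hx y hy hxi hyi
    rw [hu₁ x hx hxi, hu₂ y hy hyi, hbb]
  · ext x
    by_cases hx1 : 1 ≤ x
    · rcases lt_trichotomy x i₂ with hlt | rfl | hgt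
      · rcases lt_trichotomy x i₁ with h1 | rfl | h1
        · simp [hf₁.2.2 x hx1 h1, hf₂.2.2 x hx1 h1]
        · simp [hf₁.2.1, hf₂.2.1]
        · simp [hs₁.2.2 x h1 hlt, hs₂.2.2 x h1 hlt]
      · simp [hs₁.2.1, hs₂.2.1]
      · constructor
        · intro hx; rw [hu₁ x hx hgt, hbb]; exact hm₂.1
        · intro hx; rw [hu₂ x hx hgt, ← hbb]; exact hm₁.1
    · constructor <;> intro hx <;>
        exact absurd (Finset.mem_Icc.mp (hsub _ hx)).1 hx1
end

section
/- Let D be a normalized multiplicity-free diagram. Within a single region of D, there cannot simultaneously exist a column with exactly one box below its second crossing (Type II) and a column with at least two boxes below its second crossing (Type III). -/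

private lemma exOne {s : Finset ℕ} (h : 2 ≤ s.card) (b : ℕ) : ∃ x ∈ s, x ≠ b := by
  obtain ⟨a, ha, c, hc, hac⟩ := Finset.one_lt_card.mp h
  rcases eq_or_ne a b with rfl | h'
  · exact ⟨c, hc, hac.symm⟩
  · exact ⟨a, ha, h'⟩

private lemma useA (n : ℕ) (D : ℕ → Finset ℕ) (hMF : MultFree n D)
    (X Y i₁ r r' : ℕ) (hX : X ∈ Finset.Icc 1 n) (hY : Y ∈ Finset.Icc 1 n)
    (hXY : X ≠ Y) (h1 : 1 ≤ i₁) (h2 : i₁ < r) (h3 : r < r')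
    (hiX : i₁ ∉ D X) (hiY : i₁ ∉ D Y) (hrX : r ∈ D X) (hrY : r ∉ D Y)
    (hr' : r' ∈ D Y) : False := by
  apply hMF
  refine ⟨patA, by simp, ![i₁, r, r', r'+1], X, Y, ?_, ?_, hX, hY, hXY, ?_⟩
  · intro t; fin_cases t <;> simp <;> omega
  · intro a b hab; fin_cases a <;> fin_cases b <;> simp_all [Fin.lt_def] <;> omega
  · intro t; fin_cases t <;> simp [patA, cellOK] <;> tauto

private lemma useC (n : ℕ) (D : ℕ → Finset ℕ) (hMF : MultFree n D)
    (X Y i₁ s b b' : ℕ) (hX : X ∈ Finset.Icc 1 n) (hY : Y ∈ Finset.Icc 1 n)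
    (hXY : X ≠ Y) (h1 : 1 ≤ i₁) (h2 : i₁ < s) (h3 : s < b) (h4 : b < b')
    (hiX : i₁ ∉ D X) (hiY : i₁ ∉ D Y) (hsX : s ∉ D X) (hsY : s ∉ D Y)
    (hbX : b ∈ D X) (hbY : b ∈ D Y) (hb' : b' ∈ D X) : False := by
  apply hMF
  refine ⟨patC, by simp, ![i₁, s, b, b'], X, Y, ?_, ?_, hX, hY, hXY, ?_⟩
  · intro t; fin_cases t <;> simp <;> omega
  · intro a b hab; fin_cases a <;> fin_cases b <;> simp_all [Fin.lt_def] <;> omega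
  · intro t; fin_cases t <;> simp [patC, cellOK] <;> tauto

/-- In a normalized multiplicity-free diagram, a single region (columns with first
crossing in the same row `i₁`) cannot contain both a Type II column (exactly one box
below its second crossing) and a Type III column (at least two boxes below its second
crossing). -/
theorem no_typeII_and_typeIII (n : ℕ) (D : ℕ → Finset ℕ)
    (hsub : ∀ j, D j ⊆ Finset.Icc 1 n)
    (hMF : MultFree n D) (hN : Normalized n D)
    (j₁ j₂ i₁ s₁ s₂ : ℕ) (hj₁ : j₁ ∈ Finset.Icc 1 n) (hj₂ : j₂ ∈ Finset.Icc 1 n)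
    (hne : j₁ ≠ j₂)
    (hf₁ : FirstCross D j₁ i₁) (hf₂ : FirstCross D j₂ i₁)
    (hs₁ : SecondCross D j₁ i₁ s₁) (hs₂ : SecondCross D j₂ i₁ s₂)
    (hII : ((D j₁).filter fun i => s₁ < i).card = 1)
    (hIII : 2 ≤ ((D j₂).filter fun i => s₂ < i).card) :
    False := by
  obtain ⟨hi1, hi1j₁, hfull₁⟩ := hf₁
  obtain ⟨_, hi1j₂, hfull₂⟩ := hf₂
  obtain ⟨hlt₁, hs1c, hmid₁⟩ := hs₁
  obtain ⟨hlt₂, hs2c, hmid₂⟩ := hs₂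
  -- extract the unique box b₁ of j₁ below s₁
  obtain ⟨b₁, hb₁⟩ := Finset.card_eq_one.mp hII
  have hb₁mem : b₁ ∈ D j₁ ∧ s₁ < b₁ := by
    have : b₁ ∈ (D j₁).filter fun i => s₁ < i := hb₁ ▸ Finset.mem_singleton_self b₁
    simpa using this
  have huniq : ∀ x, x ∈ D j₁ → s₁ < x → x = b₁ := by
    intro x hx hlt
    have : x ∈ (D j₁).filter fun i => s₁ < i := Finset.mem_filter.mpr ⟨hx, hlt⟩
    rw [hb₁] at this; simpa using this
  -- some box of j₂ below s₂
  obtain ⟨b₀, hb₀mem, _⟩ := exOne hIII 0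
  have hb₀ : b₀ ∈ D j₂ ∧ s₂ < b₀ := by simpa using hb₀mem
  -- s₁ = s₂
  have hseq : s₁ = s₂ := by
    rcases lt_trichotomy s₁ s₂ with h | h | h
    · exact absurd (useA n D hMF j₂ j₁ i₁ s₁ b₁ hj₂ hj₁ hne.symm hi1 hlt₁ hb₁mem.2
        hi1j₂ hi1j₁ (hmid₂ s₁ hlt₁ h) hs1c hb₁mem.1) id
    · exact h
    · exact absurd (useA n D hMF j₁ j₂ i₁ s₂ b₀ hj₁ hj₂ hne hi1 hlt₂ hb₀.2
        hi1j₁ hi1j₂ (hmid₁ s₂ hlt₂ h) hs2c hb₀.1) id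
  subst hseq
  -- a second box b' ≠ b₁ of j₂ below s₁
  obtain ⟨b', hb'mem, hb'ne⟩ := exOne hIII b₁
  have hb' : b' ∈ D j₂ ∧ s₁ < b' := by simpa using hb'mem
  rcases lt_trichotomy b' b₁ with h | h | h
  · have hb'j₁ : b' ∉ D j₁ := fun hc => absurd (huniq b' hc hb'.2) hb'ne
    exact useA n D hMF j₂ j₁ i₁ b' b₁ hj₂ hj₁ hne.symm hi1 (hlt₁.trans hb'.2) h
      hi1j₂ hi1j₁ hb'.1 hb'j₁ hb₁mem.1
  · exact hb'ne h
  · by_cases hbj₂ : b₁ ∈ D j₂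
    · exact useC n D hMF j₂ j₁ i₁ s₁ b₁ b' hj₂ hj₁ hne.symm hi1 hlt₁ hb₁mem.2 h
        hi1j₂ hi1j₁ hs2c hs1c hbj₂ hb₁mem.1 hb'.1
    · exact useA n D hMF j₁ j₂ i₁ b₁ b' hj₁ hj₂ hne hi1 (hlt₁.trans hb₁mem.2) h
        hi1j₁ hi1j₂ hb₁mem.1 hbj₂ hb'.1
end

section
/- Let D be a normalized multiplicity-free diagram. Each region of D contains at most one column having at least two boxes below its second crossing (Type III). -/
lemma strictMono_vec4 {a b c d : ℕ} (h1 : a < b) (h2 : b < c) (h3 : c < d) :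
    StrictMono ![a, b, c, d] := by
  intro x y hxy
  fin_cases x <;> fin_cases y <;>
    simp_all [Matrix.cons_val_zero, Matrix.cons_val_one, Matrix.head_cons,
      Matrix.cons_val_fin_one] <;> omega

lemma two_elts {S : Finset ℕ} {s : ℕ} (h : 2 ≤ (S.filter fun i => s < i).card) :
    ∃ a b, a ∈ S ∧ b ∈ S ∧ s < a ∧ a < b ∧ ∀ x ∈ S, s < x → a ≤ x := by
  have hne : (S.filter fun i => s < i).Nonempty := Finset.card_pos.mp (by omega)
  have hmin := (S.filter fun i => s < i).min'_mem hne
  obtain ⟨b, hb, hbne⟩ := Finset.exists_mem_ne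
    (s := S.filter fun i => s < i) (by omega) ((S.filter fun i => s < i).min' hne)
  have h1 := Finset.mem_filter.mp hmin
  have h2 := Finset.mem_filter.mp hb
  exact ⟨_, b, h1.1, h2.1, h1.2,
    lt_of_le_of_ne (Finset.min'_le _ b hb) (Ne.symm hbne),
    fun x hx hsx => Finset.min'_le _ x (Finset.mem_filter.mpr ⟨hx, hsx⟩)⟩

set_option maxHeartbeats 1000000 in
/-- In a normalized multiplicity-free diagram, each region contains at most one Type III
column: two distinct columns of the same region cannot both have at least two boxes
below their second crossings. -/
theorem at_most_one_typeIII (n : ℕ) (D : ℕ → Finset ℕ)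
    (hsub : ∀ j, D j ⊆ Finset.Icc 1 n)
    (hMF : MultFree n D) (hN : Normalized n D)
    (j₁ j₂ i₁ s₁ s₂ : ℕ) (hj₁ : j₁ ∈ Finset.Icc 1 n) (hj₂ : j₂ ∈ Finset.Icc 1 n)
    (hne : j₁ ≠ j₂)
    (hf₁ : FirstCross D j₁ i₁) (hf₂ : FirstCross D j₂ i₁)
    (hs₁ : SecondCross D j₁ i₁ s₁) (hs₂ : SecondCross D j₂ i₁ s₂)
    (hIII₁ : 2 ≤ ((D j₁).filter fun i => s₁ < i).card)
    (hIII₂ : 2 ≤ ((D j₂).filter fun i => s₂ < i).card) :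
    False := by
  obtain ⟨a₁, a₂, ha₁D, ha₂D, hsa₁, ha₁₂, ha₁min⟩ := two_elts hIII₁
  obtain ⟨b₁, b₂, hb₁D, hb₂D, hsb₁, hb₁₂, hb₁min⟩ := two_elts hIII₂
  obtain ⟨hi₁, hi₁n₁, _⟩ := hf₁
  obtain ⟨_, hi₁n₂, _⟩ := hf₂
  obtain ⟨his₁, hs₁n, hs₁fill⟩ := hs₁
  obtain ⟨his₂, hs₂n, hs₂fill⟩ := hs₂
  rcases lt_trichotomy s₁ s₂ with h | h | h
  · -- pattern A with columns (j₂, j₁), rows i₁ < s₁ < a₁ < a₂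
    exact hMF ⟨patA, by simp, ![i₁, s₁, a₁, a₂], j₂, j₁,
      by intro r; fin_cases r <;> simp <;> omega,
      strictMono_vec4 his₁ hsa₁ ha₁₂, hj₂, hj₁, hne.symm,
      by
        have hs₁j₂ : s₁ ∈ D j₂ := hs₂fill s₁ his₁ h
        intro r; fin_cases r <;>
          simp_all [patA, cellOK]⟩
  · -- s₁ = s₂ : compare minimal boxes below the common second crossing
    rcases lt_trichotomy a₁ b₁ with h2 | h2 | h2
    · -- pattern A with columns (j₁, j₂), rows i₁ < a₁ < b₁ < b₂
      exact hMF ⟨patA, by simp, ![i₁, a₁, b₁, b₂], j₁, j₂,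
        by intro r; fin_cases r <;> simp <;> omega,
        strictMono_vec4 (lt_trans his₁ hsa₁) h2 hb₁₂, hj₁, hj₂, hne,
        by
          have ha₁n₂ : a₁ ∉ D j₂ := fun hc => absurd (hb₁min a₁ hc (h ▸ hsa₁)) (by omega)
          intro r; fin_cases r <;> simp_all [patA, cellOK]⟩
    · -- pattern C with columns (j₁, j₂), rows i₁ < s₁ < a₁ < a₂
      exact hMF ⟨patC, by simp, ![i₁, s₁, a₁, a₂], j₁, j₂,
        by intro r; fin_cases r <;> simp <;> omega,
        strictMono_vec4 his₁ hsa₁ ha₁₂, hj₁, hj₂, hne,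
        by
          have hs₁n₂ : s₁ ∉ D j₂ := h ▸ hs₂n
          have ha₁j₂ : a₁ ∈ D j₂ := h2 ▸ hb₁D
          intro r; fin_cases r <;> simp_all [patC, cellOK]⟩
    · -- pattern A with columns (j₂, j₁), rows i₁ < b₁ < a₁ < a₂
      exact hMF ⟨patA, by simp, ![i₁, b₁, a₁, a₂], j₂, j₁,
        by intro r; fin_cases r <;> simp <;> omega,
        strictMono_vec4 (lt_trans his₂ (h ▸ hsb₁)) h2 ha₁₂, hj₂, hj₁, hne.symm,
        by
          have hb₁n₁ : b₁ ∉ D j₁ := fun hc => absurd (ha₁min b₁ hc (h ▸ hsb₁)) (by omega)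
          intro r; fin_cases r <;> simp_all [patA, cellOK]⟩
  · -- pattern A with columns (j₁, j₂), rows i₁ < s₂ < b₁ < b₂
    exact hMF ⟨patA, by simp, ![i₁, s₂, b₁, b₂], j₁, j₂,
      by intro r; fin_cases r <;> simp <;> omega,
      strictMono_vec4 his₂ hsb₁ hb₁₂, hj₁, hj₂, hne,
      by
        have hs₂j₁ : s₂ ∈ D j₁ := hs₁fill s₂ his₂ h
        intro r; fin_cases r <;> simp_all [patA, cellOK]⟩
end

section
/- Let D be a normalized multiplicity-free diagram with nonempty column D_{j₁} = {d₁ < d₂ < ... < d_k} whose first crossing is in row i₁, and let D_{j₂} (j₁ < j₂, in a later region) have first crossing in row i₂ > i₁ and satisfy D_{j₂} ≠ [i₂ - 1] (some box of D_{j₂} lies below row i₂). Then i₂ > d_{k-1} (with d₀ = 0); i.e., the first crossing of column j₂ lies strictly below row d_{k-1}. -/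

lemma cellOK_none' {D : ℕ → Finset ℕ} {j i : ℕ} : cellOK D j i none := trivial

lemma cellOK_box {D : ℕ → Finset ℕ} {j i : ℕ} (h : i ∈ D j) :
    cellOK D j i (some true) := by simp [cellOK, h]

lemma cellOK_cross {D : ℕ → Finset ℕ} {j i : ℕ} (h : i ∉ D j) :
    cellOK D j i (some false) := by simp [cellOK, h]

lemma mult_build (n : ℕ) (D : ℕ → Finset ℕ) (p : Fin 4 → Option Bool × Option Bool)
    (hp : p ∈ [patA, patB, patC, patD, patE, patF])
    (a b c d c1 c2 : ℕ) (h1 : 1 ≤ a) (hab : a < b) (hbc : b < c) (hcd : c < d)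
    (hc1l : 1 ≤ c1) (hc1r : c1 ≤ n) (hc2l : 1 ≤ c2) (hc2r : c2 ≤ n) (hcc : c1 ≠ c2)
    (H0 : cellOK D c1 a (p 0).1 ∧ cellOK D c2 a (p 0).2)
    (H1 : cellOK D c1 b (p 1).1 ∧ cellOK D c2 b (p 1).2)
    (H2 : cellOK D c1 c (p 2).1 ∧ cellOK D c2 c (p 2).2)
    (H3 : cellOK D c1 d (p 3).1 ∧ cellOK D c2 d (p 3).2) :
    Multiplicitous n D := by
  refine ⟨p, hp, ![a, b, c, d], c1, c2, ?_, ?_, Finset.mem_Icc.2 ⟨hc1l, hc1r⟩,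
    Finset.mem_Icc.2 ⟨hc2l, hc2r⟩, hcc, ?_⟩
  · intro r
    fin_cases r
    · exact h1
    · exact h1.trans hab.le
    · exact h1.trans (hab.trans hbc).le
    · exact h1.trans ((hab.trans hbc).trans hcd).le
  · intro x y hxy
    fin_cases x <;> fin_cases y <;>
      first
        | exact absurd hxy (by decide)
        | exact hab
        | exact hbc
        | exact hcd
        | exact hab.trans hbc
        | exact hbc.trans hcd
        | exact (hab.trans hbc).trans hcd
  · intro r
    fin_cases r
    · exact H0
    · exact H1
    · exact H2
    · exact H3

/-- Lemma "lower than second last": in a normalized multiplicity-free diagram, let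
`D_{j₁} = {d₁ < … < d_k}` be nonempty with first crossing in row `i₁`, and let column
`j₂ > j₁` lie in a later region (first crossing in row `i₂ > i₁`) with
`D_{j₂} ≠ [i₂ - 1]`.  Then `i₂ > d_{k-1}`, where `d_{k-1}` is the second largest element
of `D_{j₁}` (taken to be `0` if `k = 1`). -/
theorem firstCross_gt_second_largest (n : ℕ) (D : ℕ → Finset ℕ)
    (hsub : ∀ j, D j ⊆ Finset.Icc 1 n)
    (hMF : MultFree n D) (hN : Normalized n D)
    (j₁ j₂ i₁ i₂ : ℕ) (hj₁ : 1 ≤ j₁) (hjj : j₁ < j₂) (hj₂ : j₂ ≤ n)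
    (hne : (D j₁).Nonempty)
    (hf₁ : FirstCross D j₁ i₁) (hf₂ : FirstCross D j₂ i₂) (h12 : i₁ < i₂)
    (hD₂ : D j₂ ≠ Finset.Icc 1 (i₂ - 1)) :
    ((D j₁).erase ((D j₁).max' hne)).sup id < i₂ := by
  by_contra hlt
  push_neg at hlt
  set P := D j₁ with hP
  set M := P.max' hne with hM
  have hMmem : M ∈ P := P.max'_mem hne
  have hi1 : 1 ≤ i₁ := hf₁.1
  have hi2 : 1 ≤ i₂ := hf₂.1
  have hx1 : i₁ ∉ P := hf₁.2.1
  have hx2 : i₂ ∉ D j₂ := hf₂.2.1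
  have hQbox : ∀ r, 1 ≤ r → r < i₂ → r ∈ D j₂ := hf₂.2.2
  have hi1Q : i₁ ∈ D j₂ := hQbox i₁ hi1 h12
  -- get the second largest element d of P with i₂ ≤ d < M
  have herase : ((P.erase M)).Nonempty := by
    by_contra h
    rw [Finset.not_nonempty_iff_eq_empty] at h
    rw [h] at hlt
    simp at hlt
    omega
  obtain ⟨d, hdmem, hdeq⟩ := Finset.exists_mem_eq_sup (P.erase M) herase id
  have hdP : d ∈ P := Finset.mem_of_mem_erase hdmem
  have hdM : d ≠ M := Finset.ne_of_mem_erase hdmem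
  have hdlt : d < M := lt_of_le_of_ne (P.le_max' d hdP) hdM
  have hdge : i₂ ≤ d := by rw [hdeq] at hlt; exact hlt
  -- get a box b of D j₂ strictly below i₂
  have hsubQ : Finset.Icc 1 (i₂ - 1) ⊆ D j₂ := by
    intro r hr
    rw [Finset.mem_Icc] at hr
    exact hQbox r hr.1 (by omega)
  obtain ⟨b, hbQ, hbnot⟩ : ∃ b ∈ D j₂, b ∉ Finset.Icc 1 (i₂ - 1) :=
    Finset.exists_of_ssubset (lt_of_le_of_ne hsubQ (Ne.symm hD₂))
  have hb1 : 1 ≤ b := (Finset.mem_Icc.1 (hsub j₂ hbQ)).1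
  have hbne : b ≠ i₂ := fun e => hx2 (e ▸ hbQ)
  have hb : i₂ < b := by
    rw [Finset.mem_Icc] at hbnot
    omega
  have hj₁n : j₁ ≤ n := le_trans hjj.le hj₂
  have hj₂1 : 1 ≤ j₂ := le_trans hj₁ hjj.le
  have hjne : j₁ ≠ j₂ := hjj.ne
  apply hMF
  by_cases hA : i₂ ∈ P
  · -- Case A : i₂ is a box of column j₁
    by_cases hPQ : ∃ r, i₂ < r ∧ r ∈ P ∧ r ∈ D j₂
    · obtain ⟨r, hr1, hr2, hr3⟩ := hPQ
      exact mult_build n D patD (by simp) i₁ i₂ r (r + 1) j₁ j₂ hi1 h12 hr1 (by omega)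
        hj₁ hj₁n hj₂1 hj₂ hjne
        ⟨cellOK_cross hx1, cellOK_box hi1Q⟩
        ⟨cellOK_box hA, cellOK_cross hx2⟩
        ⟨cellOK_box hr2, cellOK_box hr3⟩
        ⟨cellOK_none', cellOK_none'⟩
    · push_neg at hPQ
      have hM2 : i₂ < M := lt_of_le_of_lt hdge hdlt
      have hMQ : M ∉ D j₂ := hPQ M hM2 hMmem
      have hbP : b ∉ P := fun h => hPQ b hb h hbQ
      have hbM : b ≠ M := fun e => hbP (e ▸ hMmem)
      rcases lt_or_gt_of_ne hbM with hlt' | hgt'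
      · -- b < M : pattern F with columns (j₂, j₁)
        exact mult_build n D patF (by simp) i₁ i₂ b M j₂ j₁ hi1 h12 hb hlt'
          hj₂1 hj₂ hj₁ hj₁n (Ne.symm hjne)
          ⟨cellOK_box hi1Q, cellOK_cross hx1⟩
          ⟨cellOK_cross hx2, cellOK_box hA⟩
          ⟨cellOK_box hbQ, cellOK_cross hbP⟩
          ⟨cellOK_cross hMQ, cellOK_box hMmem⟩
      · -- M < b : pattern E with columns (j₁, j₂)
        exact mult_build n D patE (by simp) i₁ i₂ M b j₁ j₂ hi1 h12 hM2 hgt'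
          hj₁ hj₁n hj₂1 hj₂ hjne
          ⟨cellOK_cross hx1, cellOK_box hi1Q⟩
          ⟨cellOK_box hA, cellOK_cross hx2⟩
          ⟨cellOK_box hMmem, cellOK_cross hMQ⟩
          ⟨cellOK_cross hbP, cellOK_box hbQ⟩
  · -- Case B : i₂ is a crossing of column j₁
    have hdi : i₂ < d := lt_of_le_of_ne hdge (fun e => hA (e ▸ hdP))
    by_cases hdQ : d ∈ D j₂
    · -- pattern B with rows i₁, i₂, d, M
      exact mult_build n D patB (by simp) i₁ i₂ d M j₁ j₂ hi1 h12 hdi hdlt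
        hj₁ hj₁n hj₂1 hj₂ hjne
        ⟨cellOK_cross hx1, cellOK_box hi1Q⟩
        ⟨cellOK_cross hA, cellOK_cross hx2⟩
        ⟨cellOK_box hdP, cellOK_box hdQ⟩
        ⟨cellOK_box hMmem, cellOK_none'⟩
    · have hbd : b ≠ d := fun e => hdQ (e ▸ hbQ)
      rcases lt_or_gt_of_ne hbd with hlt' | hgt'
      · by_cases hbP : b ∈ P
        · -- pattern B with rows i₁, i₂, b, d
          exact mult_build n D patB (by simp) i₁ i₂ b d j₁ j₂ hi1 h12 hb hlt'
            hj₁ hj₁n hj₂1 hj₂ hjne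
            ⟨cellOK_cross hx1, cellOK_box hi1Q⟩
            ⟨cellOK_cross hA, cellOK_cross hx2⟩
            ⟨cellOK_box hbP, cellOK_box hbQ⟩
            ⟨cellOK_box hdP, cellOK_none'⟩
        · -- pattern A with columns (j₂, j₁), rows i₂, b, d, d+1
          exact mult_build n D patA (by simp) i₂ b d (d + 1) j₂ j₁ hi2 hb hlt' (by omega)
            hj₂1 hj₂ hj₁ hj₁n (Ne.symm hjne)
            ⟨cellOK_cross hx2, cellOK_cross hA⟩
            ⟨cellOK_box hbQ, cellOK_cross hbP⟩
            ⟨cellOK_none', cellOK_box hdP⟩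
            ⟨cellOK_none', cellOK_none'⟩
      · -- d < b : pattern A with columns (j₁, j₂), rows i₂, d, b, b+1
        exact mult_build n D patA (by simp) i₂ d b (b + 1) j₁ j₂ hi2 hdi hgt' (by omega)
          hj₁ hj₁n hj₂1 hj₂ hjne
          ⟨cellOK_cross hA, cellOK_cross hx2⟩
          ⟨cellOK_box hdP, cellOK_cross hdQ⟩
          ⟨cellOK_none', cellOK_box hbQ⟩
          ⟨cellOK_none', cellOK_none'⟩
end
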